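/- Let k ≥ 2 and let U be the connected graph on 2k + 2 vertices 0,…,2k+1 in which the vertices 0,…,2k−1 form the cycle C_{2k} (vertex i adjacent to vertex j iff i − j ≡ ±1 (mod 2k)), vertex 2k is a pendant vertex adjacent only to vertex 0, and vertex 2k+1 is a pendant vertex adjacent only to vertex k (the cycle vertex opposite to 0). Let Δ be the distance squared matrix of U and, for a vertex v, let Δ_v denote the column of Δ indexed by v. Then Δ_0 − Δ_k − (k/(k+2))·(Δ_{2k} − Δ_{2k+1}) = 0; in particular Δ is singular, so i_0(Δ) ≥ 1. -/

import Mathlib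

open Matrix

/-- The distance squared matrix of a graph. -/
noncomputable def distSqMatrix {V : Type*} [Fintype V] (G : SimpleGraph V) :
    Matrix V V ℝ := Matrix.of fun i j => ((G.dist i j : ℝ)) ^ 2

/-- number of positive eigenvalues (with multiplicity) of a real symmetric matrix -/
noncomputable def iPos {V : Type*} [Fintype V] [DecidableEq V] (M : Matrix V V ℝ) : ℕ :=
  if h : M.IsHermitian then (Finset.univ.filter fun i => 0 < h.eigenvalues i).card else 0

/-- number of negative eigenvalues (with multiplicity) of a real symmetric matrix -/
noncomputable def iNeg {V : Type*} [Fintype V] [DecidableEq V] (M : Matrix V V ℝ) : ℕ :=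
  if h : M.IsHermitian then (Finset.univ.filter fun i => h.eigenvalues i < 0).card else 0

/-- multiplicity of 0 as an eigenvalue of a real symmetric matrix -/
noncomputable def iZero {V : Type*} [Fintype V] [DecidableEq V] (M : Matrix V V ℝ) : ℕ :=
  if h : M.IsHermitian then (Finset.univ.filter fun i => h.eigenvalues i = 0).card else 0

/-! Let `x` be a cycle vertex with `a = d(x, 0)` and `b = d(x, k)`. As `0` and `k` are antipodal
on `C_{2k}`, `a + b = k`, while the pendants give `d(x, 2k) = a + 1` and `d(x, 2k + 1) = b + 1`.
Hence `Δ_0 - Δ_k = (a - b) k` and `Δ_{2k} - Δ_{2k+1} = (a - b)(k + 2)` in row `x`; the two pendant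
rows are checked directly. The distances themselves are certified by potentials that change by at
most one along edges and drop by one along some edge at every vertex but the target. -/

namespace SimpleGraph

variable {V : Type*} {G : SimpleGraph V} {x₀ : V} {f : V → ℕ}

theorem Walk.le_length_of_lipschitz (h₀ : f x₀ = 0)
    (hlip : ∀ u v, G.Adj u v → f u ≤ f v + 1) {i : V} (p : G.Walk i x₀) : f i ≤ p.length := by
  induction p with
  | nil => simp [h₀]
  | cons hadj _ ih => grind [Walk.length_cons]

theorem exists_walk_length_eq_of_descent (h₀ : f x₀ = 0)
    (hdesc : ∀ i ≠ x₀, ∃ v, G.Adj i v ∧ f v + 1 = f i) (i : V) :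
    ∃ p : G.Walk i x₀, p.length = f i := by
  induction hn : f i generalizing i with
  | zero =>
    obtain rfl : i = x₀ := by
      by_contra hi
      obtain ⟨v, -, hv⟩ := hdesc i hi
      omega
    exact ⟨.nil, rfl⟩
  | succ n ih =>
    obtain ⟨v, hadj, hv⟩ := hdesc i (by rintro rfl; omega)
    obtain ⟨p, hp⟩ := ih v (by omega)
    exact ⟨.cons hadj p, by simp [hp]⟩

theorem connected_of_descent (h₀ : f x₀ = 0)
    (hdesc : ∀ i ≠ x₀, ∃ v, G.Adj i v ∧ f v + 1 = f i) : G.Connected :=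
  (connected_iff_exists_forall_reachable G).2
    ⟨x₀, fun i => (exists_walk_length_eq_of_descent h₀ hdesc i).elim
      fun p _ => ⟨p.reverse⟩⟩

theorem dist_eq_of_lipschitz_of_descent (h₀ : f x₀ = 0)
    (hlip : ∀ u v, G.Adj u v → f u ≤ f v + 1)
    (hdesc : ∀ i ≠ x₀, ∃ v, G.Adj i v ∧ f v + 1 = f i) (i : V) : G.dist i x₀ = f i := by
  obtain ⟨p, hp⟩ := exists_walk_length_eq_of_descent h₀ hdesc i
  obtain ⟨q, hq⟩ := Reachable.exists_walk_length_eq_dist ⟨p⟩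
  have := q.le_length_of_lipschitz h₀ hlip
  have := hp ▸ dist_le p
  omega

theorem Connected.dist_eq_add_one_of_pendant {p q x : V} (hG : G.Connected)
    (hp : ∀ v, G.Adj p v ↔ v = q) (hx : x ≠ p) : G.dist x p = G.dist x q + 1 := by
  have hpq : G.dist q p = 1 := dist_eq_one_iff_adj.2 ((hp q).2 rfl).symm
  have hle : G.dist x p ≤ G.dist x q + G.dist q p := hG.dist_triangle
  obtain ⟨w, hw⟩ := hG.exists_walk_length_eq_dist p x
  cases w with
  | nil => exact absurd rfl hx
  | @cons _ v _ hadj w =>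
    obtain rfl : v = q := (hp v).1 hadj
    have hge : G.dist x v ≤ w.length := dist_comm (G := G) ▸ dist_le w
    rw [Walk.length_cons, dist_comm] at hw
    omega

end SimpleGraph

theorem Matrix.det_eq_zero_of_col_sub_sub_smul {n R : Type*} [Fintype n] [DecidableEq n]
    [Field R] (M : Matrix n n R) {a b c d : n} (t : R) (hb : a ≠ b) (hc : a ≠ c) (hd : a ≠ d)
    (h : ∀ i, M i a - M i b - t * (M i c - M i d) = 0) : M.det = 0 := by
  refine Matrix.exists_mulVec_eq_zero_iff.1
    ⟨Pi.single a 1 - Pi.single b 1 - t • (Pi.single c 1 - Pi.single d 1), fun hw => ?_, ?_⟩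
  · simpa [hb.symm, hc.symm, hd.symm] using congrFun hw a
  · ext i
    simpa [Matrix.mulVec_sub, Matrix.mulVec_smul, Matrix.mulVec_single] using h i

theorem one_le_iZero_of_det_eq_zero {V : Type*} [Fintype V] [DecidableEq V]
    {M : Matrix V V ℝ} (hM : M.IsHermitian) (h : M.det = 0) : 1 ≤ iZero M := by
  obtain ⟨i, -, hi⟩ := Finset.prod_eq_zero_iff.1 (hM.det_eq_prod_eigenvalues ▸ h)
  rw [iZero, dif_pos hM, Nat.one_le_iff_ne_zero, ← Nat.pos_iff_ne_zero, Finset.card_pos]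
  exact ⟨i, by simpa using hi⟩

theorem isHermitian_distSqMatrix {V : Type*} [Fintype V] (G : SimpleGraph V) :
    (distSqMatrix G).IsHermitian :=
  Matrix.IsHermitian.ext fun i j => by simp [distSqMatrix, SimpleGraph.dist_comm]

theorem sq_sub_sq_sub_div_mul_sq_sub_sq (a b : ℝ) (h : a + b + 2 ≠ 0) :
    a ^ 2 - b ^ 2 - (a + b) / (a + b + 2) * ((a + 1) ^ 2 - (b + 1) ^ 2) = 0 := by
  field_simp
  ring

def cycleWithPendants (k : ℕ) : SimpleGraph (Fin (2 * k + 2)) :=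
  SimpleGraph.fromRel (fun a b : Fin (2 * k + 2) =>
    ((a : ℕ) < 2 * k ∧ (b : ℕ) = ((a : ℕ) + 1) % (2 * k)) ∨
    ((a : ℕ) = 2 * k ∧ (b : ℕ) = 0) ∨
    ((a : ℕ) = 2 * k + 1 ∧ (b : ℕ) = k))

namespace cycleWithPendants

variable (k : ℕ)

def root : Fin (2 * k + 2) := ⟨0, Nat.succ_pos _⟩

def antipode : Fin (2 * k + 2) :=
  ⟨k, (Nat.le_mul_of_pos_left k two_pos).trans_lt (Nat.lt_add_of_pos_right two_pos)⟩

def rootLeaf : Fin (2 * k + 2) := ⟨2 * k, Nat.lt_add_of_pos_right two_pos⟩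

def antipodeLeaf : Fin (2 * k + 2) := ⟨2 * k + 1, Nat.lt_succ_self _⟩

/-- The edges of `cycleWithPendants k`, oriented, with the wrap-around edge `2k - 1 — 0` split off
so that adjacency becomes linear arithmetic. -/
def Edge (x y : ℕ) : Prop :=
  x + 1 < 2 * k ∧ y = x + 1 ∨ x + 1 = 2 * k ∧ y = 0 ∨ x = 2 * k ∧ y = 0 ∨ x = 2 * k + 1 ∧ y = k

def distRoot (x : ℕ) : ℕ :=
  if x ≤ k then x else if x < 2 * k then 2 * k - x else if x = 2 * k then 1 else k + 1

def distAntipode (x : ℕ) : ℕ :=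
  if x ≤ k then k - x else if x < 2 * k then x - k else if x = 2 * k then k + 1 else 1

variable {k}

theorem succ_mod_two_mul_eq_iff {x y : ℕ} (hx : x < 2 * k) :
    y = (x + 1) % (2 * k) ↔ x + 1 < 2 * k ∧ y = x + 1 ∨ x + 1 = 2 * k ∧ y = 0 := by
  rcases Nat.lt_or_ge (x + 1) (2 * k) with h | h
  · rw [Nat.mod_eq_of_lt h]
    omega
  · rw [show x + 1 = 2 * k by omega, Nat.mod_self]
    omega

theorem adj_iff (hk : 0 < k) {a b : Fin (2 * k + 2)} :
    (cycleWithPendants k).Adj a b ↔ Edge k a b ∨ Edge k b a := by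
  have hrel : ∀ x y : Fin (2 * k + 2),
      ((x : ℕ) < 2 * k ∧ (y : ℕ) = ((x : ℕ) + 1) % (2 * k)) ∨ ((x : ℕ) = 2 * k ∧ (y : ℕ) = 0) ∨
        ((x : ℕ) = 2 * k + 1 ∧ (y : ℕ) = k) ↔ Edge k x y := by
    intro x y
    by_cases hx : (x : ℕ) < 2 * k
    · rw [succ_mod_two_mul_eq_iff hx, Edge]
      omega
    · simp only [Edge]
      omega
  rw [cycleWithPendants, SimpleGraph.fromRel_adj, hrel, hrel, ne_eq, Fin.ext_iff]
  constructor
  · exact And.right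
  · intro h
    exact ⟨by unfold Edge at h; omega, h⟩

theorem exists_adj_distRoot_add_one_eq (hk : 0 < k) :
    ∀ i ≠ root k, ∃ v, (cycleWithPendants k).Adj i v ∧ distRoot k v + 1 = distRoot k i := by
  intro ⟨x, hx⟩ hi
  replace hi : x ≠ 0 := fun h => hi (Fin.ext h)
  refine ⟨⟨if x ≤ k then x - 1 else if x + 1 < 2 * k then x + 1 else if x = 2 * k + 1 then k
    else 0, by split_ifs <;> omega⟩, (adj_iff hk).2 ?_, ?_⟩ <;>
  · simp only [Edge, distRoot]
    split_ifs <;> omega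

theorem exists_adj_distAntipode_add_one_eq (hk : 0 < k) :
    ∀ i ≠ antipode k, ∃ v, (cycleWithPendants k).Adj i v ∧
      distAntipode k v + 1 = distAntipode k i := by
  intro ⟨x, hx⟩ hi
  replace hi : x ≠ k := fun h => hi (Fin.ext h)
  refine ⟨⟨if x < k then x + 1 else if x < 2 * k then x - 1 else if x = 2 * k then 0 else k,
    by split_ifs <;> omega⟩, (adj_iff hk).2 ?_, ?_⟩ <;>
  · simp only [Edge, distAntipode]
    split_ifs <;> omega

theorem distRoot_add_distAntipode {x : ℕ} (hx : x < 2 * k) :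
    distRoot k x + distAntipode k x = k := by
  simp only [distRoot, distAntipode]
  split_ifs <;> omega

theorem connected (hk : 0 < k) : (cycleWithPendants k).Connected :=
  SimpleGraph.connected_of_descent (f := fun i => distRoot k i) (by simp [root, distRoot])
    (exists_adj_distRoot_add_one_eq hk)

theorem dist_root (hk : 0 < k) (i : Fin (2 * k + 2)) :
    (cycleWithPendants k).dist i (root k) = distRoot k i := by
  refine SimpleGraph.dist_eq_of_lipschitz_of_descent
    (f := fun i : Fin (2 * k + 2) => distRoot k i) (by simp [root, distRoot])
    (fun u v huv => ?_) (exists_adj_distRoot_add_one_eq hk) i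
  rw [adj_iff hk] at huv
  unfold Edge at huv
  simp only [distRoot]
  split_ifs <;> omega

theorem dist_antipode (hk : 0 < k) (i : Fin (2 * k + 2)) :
    (cycleWithPendants k).dist i (antipode k) = distAntipode k i := by
  refine SimpleGraph.dist_eq_of_lipschitz_of_descent
    (f := fun i : Fin (2 * k + 2) => distAntipode k i) (by simp [antipode, distAntipode])
    (fun u v huv => ?_) (exists_adj_distAntipode_add_one_eq hk) i
  rw [adj_iff hk] at huv
  unfold Edge at huv
  simp only [distAntipode]
  split_ifs <;> omega

theorem dist_rootLeaf (hk : 0 < k) {i : Fin (2 * k + 2)} (hi : i ≠ rootLeaf k) :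
    (cycleWithPendants k).dist i (rootLeaf k) = distRoot k i + 1 := by
  rw [(connected hk).dist_eq_add_one_of_pendant (fun v => ?_) hi, dist_root hk]
  simp only [adj_iff hk, rootLeaf, root, Fin.ext_iff, Edge, true_and]
  omega

theorem dist_antipodeLeaf (hk : 0 < k) {i : Fin (2 * k + 2)} (hi : i ≠ antipodeLeaf k) :
    (cycleWithPendants k).dist i (antipodeLeaf k) = distAntipode k i + 1 := by
  rw [(connected hk).dist_eq_add_one_of_pendant (fun v => ?_) hi, dist_antipode hk]
  simp only [adj_iff hk, antipodeLeaf, antipode, Fin.ext_iff, Edge, true_and]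
  omega

theorem distSqMatrix_col_relation (hk : 0 < k) (i : Fin (2 * k + 2)) :
    distSqMatrix (cycleWithPendants k) i (root k) -
      distSqMatrix (cycleWithPendants k) i (antipode k) -
      (k : ℝ) / ((k : ℝ) + 2) * (distSqMatrix (cycleWithPendants k) i (rootLeaf k) -
        distSqMatrix (cycleWithPendants k) i (antipodeLeaf k)) = 0 := by
  simp only [distSqMatrix, Matrix.of_apply, dist_root hk, dist_antipode hk]
  by_cases h₁ : i = rootLeaf k
  · subst h₁
    rw [SimpleGraph.dist_self, dist_antipodeLeaf hk (by simp [rootLeaf, antipodeLeaf])]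
    obtain ⟨hr, ha⟩ : distRoot k (2 * k) = 1 ∧ distAntipode k (2 * k) = k + 1 := by
      simp only [distRoot, distAntipode]
      split_ifs <;> omega
    simp only [rootLeaf, hr, ha]
    push_cast
    field_simp
    ring
  by_cases h₂ : i = antipodeLeaf k
  · subst h₂
    rw [SimpleGraph.dist_self, dist_rootLeaf hk (by simp [rootLeaf, antipodeLeaf])]
    obtain ⟨hr, ha⟩ : distRoot k (2 * k + 1) = k + 1 ∧ distAntipode k (2 * k + 1) = 1 := by
      simp only [distRoot, distAntipode]
      split_ifs <;> omega
    simp only [antipodeLeaf, hr, ha]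
    push_cast
    field_simp
    ring
  rw [dist_rootLeaf hk h₁, dist_antipodeLeaf hk h₂]
  have hx : (i : ℕ) < 2 * k := by
    have := i.isLt
    simp only [rootLeaf, antipodeLeaf, Fin.ext_iff] at h₁ h₂
    omega
  have hsum : (k : ℝ) = distRoot k i + distAntipode k i := by
    exact_mod_cast (distRoot_add_distAntipode hx).symm
  rw [hsum]
  push_cast
  exact sq_sub_sq_sub_div_mul_sq_sub_sq _ _ (by positivity)

end cycleWithPendants

/-- even cycle `C_{2k}` (vertices `0, …, 2k-1`) with a pendant vertex
`2k` attached to vertex `0` and a pendant vertex `2k+1` attached to the opposite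
cycle vertex `k`.  The columns of the distance squared matrix indexed by
`0, k, 2k, 2k+1` satisfy `Δ_0 − Δ_k − (k/(k+2))(Δ_{2k} − Δ_{2k+1}) = 0`; in
particular `Δ` is singular. -/
theorem stmt19 {k : ℕ} (hk : 2 ≤ k)
    (U : SimpleGraph (Fin (2 * k + 2)))
    (hU : U = SimpleGraph.fromRel (fun a b : Fin (2 * k + 2) =>
      ((a : ℕ) < 2 * k ∧ (b : ℕ) = ((a : ℕ) + 1) % (2 * k)) ∨
      ((a : ℕ) = 2 * k ∧ (b : ℕ) = 0) ∨
      ((a : ℕ) = 2 * k + 1 ∧ (b : ℕ) = k))) :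
    (∀ i : Fin (2 * k + 2),
      distSqMatrix U i ⟨0, by omega⟩ - distSqMatrix U i ⟨k, by omega⟩ -
        ((k : ℝ) / ((k : ℝ) + 2)) *
          (distSqMatrix U i ⟨2 * k, by omega⟩ - distSqMatrix U i ⟨2 * k + 1, by omega⟩)
        = 0) ∧
    1 ≤ iZero (distSqMatrix U) := by
  obtain rfl : U = cycleWithPendants k := hU
  have hrel := cycleWithPendants.distSqMatrix_col_relation (k := k) (by omega)
  refine ⟨hrel, one_le_iZero_of_det_eq_zero (isHermitian_distSqMatrix _)
    (Matrix.det_eq_zero_of_col_sub_sub_smul _ _ ?_ ?_ ?_ hrel)⟩ <;>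
  · simp only [cycleWithPendants.root, cycleWithPendants.antipode, cycleWithPendants.rootLeaf,
      cycleWithPendants.antipodeLeaf, ne_eq, Fin.ext_iff]
    omega
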